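/- There is a constant d (depending only on the universal machine) such that for all binary strings x and y: C(xy | n_x, n_y) ≥ C(x | n_x) + C(y | x, n_y) − d·(log n_x + log n_y) − d, where xy denotes the concatenation of x and y. (Chain rule lower bound for plain complexity.) -/

import Mathlib

namespace SymInfo

/-- A conditional machine: the input encodes the pair (program, conditional information). -/
abbrev Machine : Type := ℕ →. ℕ

/-- Machine `M` produces string `x` from some program, given condition `cond`. -/
def Produces (M : Machine) (x cond : List Bool) : Prop :=
  ∃ p : List Bool, Encodable.encode x ∈ M (Nat.pair (Encodable.encode p) (Encodable.encode cond))

/-- Conditional plain Kolmogorov complexity of `x` given `cond` w.r.t. `M`: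
the length of a shortest program producing `x` from `cond`. -/
noncomputable def C (M : Machine) (x cond : List Bool) : ℕ :=
  sInf {n | ∃ p : List Bool, p.length = n ∧
    Encodable.encode x ∈ M (Nat.pair (Encodable.encode p) (Encodable.encode cond))}

/-- Binary representation of a natural number. -/
def bin (n : ℕ) : List Bool := n.bits

/-- Standard pairing of two strings, used for conditioning on several objects. -/
def pair2 (a b : List Bool) : List Bool :=
  bin (Nat.pair (Encodable.encode a) (Encodable.encode b))

/-- `U` is a universal machine for plain conditional complexity: it is partial computable,
produces every string under every condition, and simulates every partial computable
machine up to an additive constant. -/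
def IsUniversal (U : Machine) : Prop :=
  Nat.Partrec U ∧ (∀ x cond : List Bool, Produces U x cond) ∧
    ∀ M : Machine, Nat.Partrec M → ∃ c : ℕ, ∀ x cond : List Bool,
      Produces M x cond → C U x cond ≤ C M x cond + c

/-- `C(x | n_x)`: complexity of `x` given (the binary representation of) its length. -/
noncomputable def CL (U : Machine) (x : List Bool) : ℕ := C U x (bin x.length)

/-- `C⁽²⁾(x | n_x) = C(C(x | n_x) | n_x)`. -/
noncomputable def C2 (U : Machine) (x : List Bool) : ℕ := C U (bin (CL U x)) (bin x.length)

/-- `I(x : y) = C(y | n_y) − C(y | x, n_y)`: the information in `x` about `y`. -/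
noncomputable def I (U : Machine) (x y : List Bool) : ℤ :=
  (C U y (bin y.length) : ℤ) - (C U y (pair2 x (bin y.length)) : ℤ)

/-- Base-2 logarithm with the convention `log 0 = 0` (and `log 1 = 0`). -/
def log2 (n : ℕ) : ℕ := Nat.log 2 n


end SymInfo

/-!
Let `m = C(xy | n_x, n_y)` and let `D` be the set of the at most `2 ^ (m + 1)` strings that
have a description of length at most `m` under the condition `(n_x, n_y)`; `D` can be
enumerated given `m` and the condition. Let `e ≥ 1` be the number of elements of `D` that
extend `x`, and `t = ⌊log e⌋`.

Given `x`, `n_y` and `m`, the string `xy` is determined by its position in the enumeration of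
these extensions, so `C(y | x, n_y) ≤ t + O(log m)`. The strings `u` of length `n_x` with at
least `2 ^ t` extensions in `D` have disjoint sets of extensions, so there are at most
`2 ^ (m + 1 - t)` of them; they can be enumerated given `n_x`, `m`, `t`, `n_y`, and `x` is one
of them, so `C(x | n_x) ≤ m - t + O(log m + log t + log n_y)`. Adding up, `t` cancels, and
`m ≤ n_x + n_y + O(1)` turns the overhead into `O(log n_x + log n_y)`.

A description with parameters `h` and index `i` is the program `selfDelimit h.bits ++ i.bits`,
of length `2 log h + log i + O(1)`. Enumerations go by stages and index each element by its
first appearance.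
-/

open Encodable Nat.Partrec.Code
open Nat.Partrec (Code)

theorem Nat.bits_injective : Function.Injective Nat.bits := fun m n h =>
  Nat.digits_inj_iff.1 <| by rw [Nat.digits_two_eq_bits, Nat.digits_two_eq_bits, h]

theorem Nat.bits_eq_bodd_cons {n : ℕ} (hn : n ≠ 0) : n.bits = n.bodd :: n.div2.bits := by
  rw [Nat.bodd_eq_bits_head, Nat.div2_bits_eq_tail]
  have : n.bits ≠ [] := by
    rw [← List.length_pos_iff, Nat.size_eq_bits_len, Nat.size_pos]; omega
  cases h : n.bits <;> simp_all

theorem Nat.size_add_le (a b : ℕ) : (a + b).size ≤ a.size + b.size + 1 := by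
  have ha := Nat.lt_size_self a
  have hb := Nat.lt_size_self b
  have : 2 ^ a.size + 2 ^ b.size ≤ 2 ^ (a.size + b.size + 1) := by
    rw [pow_succ, mul_two]
    gcongr <;> first | exact Nat.le_add_right .. | exact Nat.le_add_left ..
  exact Nat.size_le.2 (by omega)

theorem Nat.size_pair_le (a b : ℕ) : (Nat.pair a b).size ≤ 2 * (a.size + b.size) := by
  have hmax : max a b + 1 ≤ 2 ^ (a.size + b.size) := by
    have ha := Nat.lt_size_self a
    have hb := Nat.lt_size_self b
    have h₁ : 2 ^ a.size ≤ 2 ^ (a.size + b.size) := Nat.pow_le_pow_right two_pos (by omega)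
    have h₂ : 2 ^ b.size ≤ 2 ^ (a.size + b.size) := Nat.pow_le_pow_right two_pos (by omega)
    omega
  refine Nat.size_le.2 ((Nat.pair_lt_max_add_one_sq a b).trans_le ?_)
  rw [pow_mul', pow_two, pow_two]
  exact Nat.mul_le_mul hmax hmax

theorem Primrec.nat_bits : Primrec Nat.bits := by
  have : Primrec₂ fun (_ : Unit) (n : ℕ) => n.bits := by
    refine Primrec.nat_strong_rec _ (g := fun _ l =>
      some (if l.length = 0 then [] else l.length.bodd :: l.getD l.length.div2 [])) ?_ ?_
    · refine Primrec.option_some.comp <| Primrec.ite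
        (Primrec.eq.comp (Primrec.list_length.comp .snd) (.const 0)) (.const [])
        (Primrec.list_cons.comp (Primrec.nat_bodd.comp (Primrec.list_length.comp .snd))
          ((Primrec.list_getD []).comp .snd
            (Primrec.nat_div2.comp (Primrec.list_length.comp .snd))))
    · intro _ n
      rcases eq_or_ne n 0 with rfl | hn
      · simp
      · have : n.div2 < n := by rw [Nat.div2_val]; omega
        simp [hn, Nat.bits_eq_bodd_cons hn, this]
  exact this.comp (Primrec.const ()) Primrec.id

theorem Primrec.nat_pow : Primrec₂ ((· ^ ·) : ℕ → ℕ → ℕ) :=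
  Primrec₂.unpaired'.1 Nat.Primrec.pow

theorem Primrec.nat_count {β : Type*} [Primcodable β] {p : β → ℕ → Prop}
    [∀ b, DecidablePred (p b)] (hp : PrimrecRel p) : Primrec₂ fun b n => Nat.count (p b) n :=
  (Primrec.list_length.comp ((PrimrecRel.listFilter (R := fun k b => p b k) hp.swap).comp
    (Primrec.list_range.comp .snd) .fst)).of_eq fun _ => by
      simp [Nat.count, List.countP_eq_length_filter]

theorem Primrec.exists_partrec_leftInverse {γ : Type*} [Primcodable γ] {g : γ → ℕ}
    (hg : Primrec g) (hinj : Function.Injective g) :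
    ∃ ginv : ℕ →. γ, Partrec ginv ∧ ∀ c, c ∈ ginv (g c) := by
  classical
  let f (n k : ℕ) : Option γ := (decode k).bind fun c => if g c = n then some c else none
  have hf : Computable₂ f := Primrec.to_comp <| Primrec.option_bind (Primrec.decode.comp .snd) <|
    Primrec.ite (Primrec.eq.comp (hg.comp .snd) (Primrec.fst.comp .fst))
      (Primrec.option_some.comp .snd) (.const none)
  refine ⟨fun n => Nat.rfindOpt (f n), Partrec.rfindOpt hf, fun c => ?_⟩
  have hdom : (Nat.rfindOpt (f (g c))).Dom := Nat.rfindOpt_dom.2 ⟨encode c, c, by simp [f]⟩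
  have ha := Part.get_mem hdom
  generalize (Nat.rfindOpt (f (g c))).get hdom = a at ha
  obtain ⟨k, hk⟩ := Nat.rfindOpt_spec ha
  obtain ⟨a', -, ha'⟩ := Option.bind_eq_some_iff.1 hk
  split_ifs at ha' with hga'
  have : g a = g c := Option.some_injective _ ha' ▸ hga'
  exact hinj this ▸ ha

theorem Set.PairwiseDisjoint.finite_and_ncard_mul_le {ι β : Type*} {s : Set ι}
    {f : ι → Set β} {D : Set β} (hf : s.PairwiseDisjoint f) (hD : D.Finite)
    (hsub : ∀ i ∈ s, f i ⊆ D) {N : ℕ} (hN : N ≠ 0) :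
    {i ∈ s | N ≤ (f i).ncard}.Finite ∧
      {i ∈ s | N ≤ (f i).ncard}.ncard * N ≤ D.ncard := by
  set I := {i ∈ s | N ≤ (f i).ncard}
  have key : ∀ t : Finset ι, ↑t ⊆ I → t.card * N ≤ D.ncard := by
    intro t ht
    have hts : ∀ i ∈ (t : Set ι), i ∈ s := fun i hi => (ht hi).1
    calc t.card * N = ∑ i ∈ t, N := by simp
      _ ≤ ∑ i ∈ t, (f i).ncard := Finset.sum_le_sum fun i hi => (ht hi).2
      _ = (⋃ i ∈ (t : Set ι), f i).ncard := by
        rw [t.finite_toSet.ncard_biUnion (fun i hi => hD.subset (hsub i (hts i hi)))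
          (hf.subset hts), finsum_mem_coe_finset]
      _ ≤ D.ncard := Set.ncard_le_ncard (Set.iUnion₂_subset fun i hi => hsub i (hts i hi)) hD
  have hI : I.Finite := by
    by_contra hinf
    obtain ⟨t, ht, htcard⟩ := Set.Infinite.exists_subset_card_eq hinf (D.ncard + 1)
    have := key t ht
    rw [htcard] at this
    nlinarith [Nat.one_le_iff_ne_zero.2 hN]
  exact ⟨hI, by simpa [Set.ncard_eq_toFinset_card _ hI] using key hI.toFinset (by simp)⟩

namespace SymInfo

section Enumeration

open scoped Classical

variable {α : Type*} (Q : α → ℕ → ℕ → Prop)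

def enumerated (a : α) : Set ℕ := {v | ∃ s, Q a s v}

/-- `k = ⟪s, v⟫` is an entry when `v` is listed by `Q a` at stage `s` for the first time. -/
def IsEntry (a : α) (k : ℕ) : Prop :=
  Q a k.unpair.1 k.unpair.2 ∧ ∀ s < k.unpair.1, ¬Q a s k.unpair.2

/-- The element of the `i`-th entry. -/
noncomputable def enumPick (a : α) (i : ℕ) : Part ℕ :=
  Nat.rfindOpt fun k =>
    if IsEntry Q a k ∧ Nat.count (IsEntry Q a) k = i then some k.unpair.2 else none

variable {Q}

theorem isEntry_pair_find {a : α} {v : ℕ} (hv : ∃ s, Q a s v) :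
    IsEntry Q a (Nat.pair (Nat.find hv) v) := by
  simp only [IsEntry, Nat.unpair_pair]
  exact ⟨Nat.find_spec hv, fun s hs => Nat.find_min hv hs⟩

theorem IsEntry.eq_of_unpair_snd_eq {a : α} {k k' : ℕ} (hk : IsEntry Q a k)
    (hk' : IsEntry Q a k') (h : k.unpair.2 = k'.unpair.2) : k = k' := by
  have hs : k.unpair.1 = k'.unpair.1 := by
    by_contra hne
    rcases Nat.lt_or_gt_of_ne hne with hlt | hlt
    · exact hk'.2 _ hlt (h ▸ hk.1)
    · exact hk.2 _ hlt (h ▸ hk'.1)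
  rw [← Nat.pair_unpair k, ← Nat.pair_unpair k', hs, h]

theorem injOn_entries (a : α) : Set.InjOn (·.unpair.2) {k | IsEntry Q a k} :=
  fun _ hk _ hk' => hk.eq_of_unpair_snd_eq hk'

theorem image_entries (a : α) : (·.unpair.2) '' {k | IsEntry Q a k} = enumerated Q a := by
  ext v
  constructor
  · rintro ⟨k, hk, rfl⟩
    exact ⟨_, hk.1⟩
  · intro hv
    exact ⟨_, isEntry_pair_find hv, by simp⟩

theorem finite_entries {a : α} (hfin : (enumerated Q a).Finite) : {k | IsEntry Q a k}.Finite :=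
  Set.Finite.of_finite_image (image_entries a ▸ hfin) (injOn_entries a)

theorem card_toFinset_entries {a : α} (hfin : (enumerated Q a).Finite) :
    (finite_entries hfin).toFinset.card = (enumerated Q a).ncard := by
  rw [← Set.ncard_eq_toFinset_card _ (finite_entries hfin), ← image_entries,
    (injOn_entries a).ncard_image]

theorem exists_le_count_iff {a : α} (hfin : (enumerated Q a).Finite) {N : ℕ} :
    (∃ n, N ≤ Nat.count (IsEntry Q a) n) ↔ N ≤ (enumerated Q a).ncard := by
  rw [← card_toFinset_entries hfin]
  constructor
  · rintro ⟨n, hn⟩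
    exact hn.trans (Nat.count_le_card (finite_entries hfin) n)
  · intro hN
    rcases N with _ | N
    · exact ⟨0, Nat.zero_le _⟩
    · exact ⟨_, (Nat.count_nth_succ fun _ => Nat.lt_of_succ_le hN).ge⟩

theorem exists_lt_ncard_mem_enumPick {a : α} (hfin : (enumerated Q a).Finite) {v : ℕ}
    (hv : v ∈ enumerated Q a) : ∃ i < (enumerated Q a).ncard, v ∈ enumPick Q a i := by
  let k := Nat.pair (Nat.find hv) v
  have hk : IsEntry Q a k := isEntry_pair_find hv
  refine ⟨Nat.count (IsEntry Q a) k, card_toFinset_entries hfin ▸ Nat.count_lt_card _ hk, ?_⟩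
  have hdom : (enumPick Q a (Nat.count (IsEntry Q a) k)).Dom :=
    Nat.rfindOpt_dom.2 ⟨k, v, by simp [hk, k]⟩
  have hw := Part.get_mem hdom
  generalize (enumPick Q a _).get hdom = w at hw
  obtain ⟨k', hk'⟩ := Nat.rfindOpt_spec hw
  split_ifs at hk' with h
  · obtain rfl := Nat.count_injective h.1 hk h.2
    obtain rfl : k.unpair.2 = w := Option.some_injective _ hk'
    simpa [k] using hw
  · cases hk'

variable [Primcodable α]

theorem primrecRel_isEntry (hQ : PrimrecPred fun p : α × ℕ × ℕ => Q p.1 p.2.1 p.2.2) :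
    PrimrecRel (IsEntry Q) := by
  have hnot : PrimrecRel fun s (p : α × ℕ) => ¬Q p.1 s p.2.unpair.2 :=
    (hQ.comp (Primrec.pair (Primrec.fst.comp .snd)
      (Primrec.pair .fst (Primrec.snd.comp (Primrec.unpair.comp (Primrec.snd.comp .snd)))))).not
  refine PrimrecPred.and (hQ.comp (Primrec.pair .fst (Primrec.pair
    (Primrec.fst.comp (Primrec.unpair.comp .snd)) (Primrec.snd.comp (Primrec.unpair.comp .snd)))))
    ((hnot.forall_mem_list.comp
      (Primrec.list_range.comp (Primrec.fst.comp (Primrec.unpair.comp .snd))) .id).of_eq ?_)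
  simp

theorem partrec_enumPick (hQ : PrimrecPred fun p : α × ℕ × ℕ => Q p.1 p.2.1 p.2.2) :
    Partrec₂ (enumPick Q) := by
  have hE := primrecRel_isEntry hQ
  refine Partrec.rfindOpt (Primrec.to_comp ?_)
  exact Primrec.ite
    ((hE.comp (Primrec.fst.comp .fst) .snd).and
      (Primrec.eq.comp ((Primrec.nat_count hE).comp (Primrec.fst.comp .fst) .snd)
        (Primrec.snd.comp .fst)))
    (Primrec.option_some.comp (Primrec.snd.comp (Primrec.unpair.comp .snd))) (.const none)

end Enumeration

def selfDelimit (l : List Bool) : List Bool := l.flatMap (fun b => [b, b]) ++ [true, false]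

theorem selfDelimit_append_inj {l l' r r' : List Bool}
    (h : selfDelimit l ++ r = selfDelimit l' ++ r') : l = l' ∧ r = r' := by
  induction l generalizing l' with
  | nil => cases l' with
    | nil => simpa [selfDelimit] using h
    | cons b l' => cases b <;> simp [selfDelimit] at h
  | cons b l ih => cases l' with
    | nil => cases b <;> simp [selfDelimit] at h
    | cons b' l' =>
      simp only [selfDelimit, List.flatMap_cons, List.append_assoc, List.cons_append,
        List.nil_append, List.cons.injEq] at h
      obtain ⟨rfl, -, h⟩ := h
      simpa using ih (by simpa [selfDelimit] using h)

def prog (h i : ℕ) : List Bool := selfDelimit h.bits ++ i.bits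

theorem prog_inj {h i h' i' : ℕ} (he : prog h i = prog h' i') : h = h' ∧ i = i' :=
  (selfDelimit_append_inj he).imp (Nat.bits_injective ·) (Nat.bits_injective ·)

theorem length_prog (h i : ℕ) : (prog h i).length = 2 * h.size + 2 + i.size := by
  simp [prog, selfDelimit, ← Nat.size_eq_bits_len]
  ring

theorem primrec_prog : Primrec₂ prog :=
  Primrec.list_append.comp
    (Primrec.list_append.comp
      (Primrec.list_flatMap (Primrec.nat_bits.comp .fst)
        (Primrec.list_cons.comp .snd (Primrec.list_cons.comp .snd (.const []))).to₂)
      (.const _))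
    (Primrec.nat_bits.comp .snd)

theorem primrec_pair2 : Primrec₂ pair2 :=
  Primrec.nat_bits.comp
    (Primrec₂.natPair.comp (Primrec.encode.comp .fst) (Primrec.encode.comp .snd))

theorem pair2_inj {a b a' b' : List Bool} (h : pair2 a b = pair2 a' b') : a = a' ∧ b = b' :=
  (Nat.pair_eq_pair.1 (Nat.bits_injective h)).imp (encode_injective ·) (encode_injective ·)

theorem C_le_length {M : Machine} {x cond p : List Bool}
    (h : encode x ∈ M (Nat.pair (encode p) (encode cond))) : C M x cond ≤ p.length :=
  Nat.sInf_le ⟨p, rfl, h⟩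

theorem IsUniversal.exists_C_le_length_add {U : Machine} (hU : IsUniversal U) :
    ∃ c, ∀ x cond, C U x cond ≤ x.length + c := by
  let M : Machine := fun n => Part.some n.unpair.1
  have hM : Nat.Partrec M :=
    Partrec.nat_iff.1 (Primrec.fst.comp Primrec.unpair).to_comp.partrec
  obtain ⟨c, hc⟩ := hU.2.2 M hM
  refine ⟨c, fun x cond => ?_⟩
  have hx : encode x ∈ M (Nat.pair (encode x) (encode cond)) := by simp [M]
  exact (hc x cond ⟨x, hx⟩).trans (Nat.add_le_add_right (C_le_length hx) c)

theorem IsUniversal.exists_C_le_of_partrec {U : Machine} (hU : IsUniversal U)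
    {W : Type*} [Primcodable W] {σ : W → List Bool} (hσ : Primrec σ)
    (hσinj : Function.Injective σ) {F : ℕ × ℕ × W →. List Bool} (hF : Partrec F) :
    ∃ c, ∀ h i w x, x ∈ F (h, i, w) → C U x (σ w) ≤ 2 * h.size + i.size + c := by
  let g (a : ℕ × ℕ × W) : ℕ := Nat.pair (encode (prog a.1 a.2.1)) (encode (σ a.2.2))
  have hg : Primrec g := Primrec₂.natPair.comp
    (Primrec.encode.comp (primrec_prog.comp .fst (Primrec.fst.comp .snd)))
    (Primrec.encode.comp (hσ.comp (Primrec.snd.comp .snd)))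
  have hginj : Function.Injective g := by
    rintro ⟨h, i, w⟩ ⟨h', i', w'⟩ he
    obtain ⟨hp, hw⟩ := Nat.pair_eq_pair.1 he
    obtain ⟨rfl, rfl⟩ := prog_inj (encode_injective hp)
    obtain rfl := hσinj (encode_injective hw)
    rfl
  obtain ⟨ginv, hginv, hmem⟩ := hg.exists_partrec_leftInverse hginj
  let M : Machine := fun n => (ginv n).bind fun a => (F a).map encode
  have hM : Nat.Partrec M := Partrec.nat_iff.1 <|
    hginv.bind ((hF.comp Computable.snd).map (Primrec.encode.comp .snd).to_comp.to₂)
  obtain ⟨c, hc⟩ := hU.2.2 M hM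
  refine ⟨c + 2, fun h i w x hx => ?_⟩
  have hMx : encode x ∈ M (g (h, i, w)) := Part.mem_bind_iff.2 ⟨_, hmem _, Part.mem_map _ hx⟩
  have hCM : C M x (σ w) ≤ 2 * h.size + 2 + i.size := length_prog h i ▸ C_le_length hMx
  have := hc x (σ w) ⟨_, hMx⟩
  omega

theorem finite_and_ncard_le_setOf_length_le (m : ℕ) :
    {p : List Bool | p.length ≤ m}.Finite ∧
      {p : List Bool | p.length ≤ m}.ncard ≤ 2 ^ (m + 1) := by
  -- `p` is sent to the number with binary digits `p` followed by a leading `1`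
  let digits (p : List Bool) : List ℕ := p.map (fun b => cond b 1 0) ++ [1]
  have hdig : ∀ p, ∀ d ∈ digits p, d < 2 := by
    intro p d hd
    simp only [digits, List.mem_append, List.mem_map, List.mem_singleton] at hd
    rcases hd with ⟨b, -, rfl⟩ | rfl <;> [cases b; skip] <;> simp
  have hmaps : Set.MapsTo (fun p => Nat.ofDigits 2 (digits p)) {p | p.length ≤ m}
      (Set.Iio (2 ^ (m + 1))) := fun p hp => by
    refine (Nat.ofDigits_lt_base_pow_length (by norm_num) (hdig p)).trans_le ?_
    exact Nat.pow_le_pow_right (by norm_num) (by simpa [digits] using hp)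
  have hinj : Set.InjOn (fun p => Nat.ofDigits 2 (digits p)) {p | p.length ≤ m} := by
    intro p _ q _ hpq
    have := congrArg (Nat.digits 2) hpq
    simp only [Nat.digits_ofDigits 2 (by norm_num) _ (hdig _) (by simp [digits])] at this
    refine List.map_injective_iff.2 (fun a b hab => ?_) (List.append_inj_left' this rfl)
    cases a <;> cases b <;> simp_all
  refine ⟨Set.Finite.of_injOn hmaps hinj (Set.finite_Iio _), ?_⟩
  simpa using Set.ncard_le_ncard_of_injOn _ hmaps hinj (Set.finite_Iio _)

def describable (M : Machine) (m : ℕ) (cond : List Bool) : Set ℕ :=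
  {v | ∃ p : List Bool, p.length ≤ m ∧ v ∈ M (Nat.pair (encode p) (encode cond))}

theorem encode_mem_describable {M : Machine} {x cond : List Bool} (hx : Produces M x cond) :
    encode x ∈ describable M (C M x cond) cond := by
  obtain ⟨p, hp, hpx⟩ := Nat.sInf_mem (s := {n | ∃ p : List Bool, p.length = n ∧
    encode x ∈ M (Nat.pair (encode p) (encode cond))})
    (let ⟨p, hp⟩ := hx; ⟨_, p, rfl, hp⟩)
  exact ⟨p, hp.le, hpx⟩

theorem finite_and_ncard_le_describable (M : Machine) (m : ℕ) (cond : List Bool) :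
    (describable M m cond).Finite ∧ (describable M m cond).ncard ≤ 2 ^ (m + 1) := by
  classical
  obtain ⟨hfin, hcard⟩ := finite_and_ncard_le_setOf_length_le m
  let out (p : List Bool) : ℕ := ((M (Nat.pair (encode p) (encode cond))).toOption).getD 0
  have hsub : describable M m cond ⊆ out '' {p | p.length ≤ m} := by
    rintro v ⟨p, hp, hv⟩
    exact ⟨p, hp, by simp [out, Part.toOption_eq_some_iff.2 hv]⟩
  exact ⟨(hfin.image out).subset hsub,
    ((Set.ncard_le_ncard hsub (hfin.image out)).trans (Set.ncard_image_le hfin)).trans hcard⟩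

theorem ncard_describable_inter_le (M : Machine) (m : ℕ) (cond : List Bool) (s : Set ℕ) :
    (describable M m cond ∩ s).ncard ≤ 2 ^ (m + 1) :=
  (Set.ncard_le_ncard Set.inter_subset_left (finite_and_ncard_le_describable M m cond).1).trans
    (finite_and_ncard_le_describable M m cond).2

/-- `c` outputs `v` within `s` steps under the condition `mc.2` from a program of length at most
`mc.1` whose code is below `s`. -/
def DescribedWithin (c : Code) (mc : ℕ × List Bool) (s v : ℕ) : Prop :=
  ∃ p ∈ (List.range s).filterMap (decode₂ (List Bool)),
    p.length ≤ mc.1 ∧ v ∈ evaln s c (Nat.pair (encode p) (encode mc.2))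

theorem enumerated_describedWithin (c : Code) (m : ℕ) (cond : List Bool) :
    enumerated (DescribedWithin c) (m, cond) = describable (eval c) m cond := by
  ext v
  simp only [enumerated, DescribedWithin, describable, List.mem_filterMap, List.mem_range,
    Encodable.decode₂_eq_some]
  constructor
  · rintro ⟨s, p, -, hp, hv⟩
    exact ⟨p, hp, evaln_sound hv⟩
  · rintro ⟨p, hp, hv⟩
    obtain ⟨s, hs⟩ := evaln_complete.1 hv
    exact ⟨s, p, ⟨_, (Nat.left_le_pair _ _).trans_lt (evaln_bound hs), rfl⟩, hp, hs⟩

theorem primrecPred_describedWithin (c : Code) :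
    PrimrecPred fun a : (ℕ × List Bool) × ℕ × ℕ => DescribedWithin c a.1 a.2.1 a.2.2 := by
  have hR : PrimrecRel fun (p : List Bool) (a : (ℕ × List Bool) × ℕ × ℕ) =>
      p.length ≤ a.1.1 ∧ evaln a.2.1 c (Nat.pair (encode p) (encode a.1.2)) = some a.2.2 :=
    (Primrec.nat_le.comp (Primrec.list_length.comp .fst)
      (Primrec.fst.comp (Primrec.fst.comp .snd))).and
      (Primrec.eq.comp (primrec_evaln.comp (Primrec.pair
          (Primrec.pair (Primrec.fst.comp (Primrec.snd.comp .snd)) (.const c))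
          (Primrec₂.natPair.comp (Primrec.encode.comp .fst)
            (Primrec.encode.comp (Primrec.snd.comp (Primrec.fst.comp .snd))))))
        (Primrec.option_some.comp (Primrec.snd.comp (Primrec.snd.comp .snd))))
  exact (hR.exists_mem_list.comp (Primrec.listFilterMap
    (Primrec.list_range.comp (Primrec.fst.comp .snd)) (Primrec.decode₂.comp .snd).to₂)
    .id).of_eq fun a => by simp [DescribedWithin, Option.mem_def]

def extensionCodes (x : List Bool) : Set ℕ := Set.range fun y => encode (x ++ y)

theorem mem_extensionCodes_iff {x : List Bool} {v : ℕ} :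
    v ∈ extensionCodes x ↔ ∃ z ∈ (decode₂ (List Bool) v).toList, z.take x.length = x := by
  simp only [extensionCodes, Set.mem_range, Option.mem_toList, Encodable.decode₂_eq_some]
  constructor
  · rintro ⟨y, rfl⟩
    exact ⟨_, rfl, by simp⟩
  · rintro ⟨z, rfl, hz⟩
    exact ⟨z.drop x.length, by nth_rewrite 1 [← hz]; rw [List.take_append_drop]⟩

theorem pairwiseDisjoint_extensionCodes (n : ℕ) :
    {u : List Bool | u.length = n}.PairwiseDisjoint extensionCodes := by
  rintro u hu u' hu' hne
  refine Set.disjoint_left.2 ?_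
  rintro _ ⟨y, rfl⟩ ⟨y', hy'⟩
  exact hne (List.append_inj (encode_injective hy').symm (hu.trans hu'.symm)).1

def ExtensionDescribedWithin (c : Code) (a : (ℕ × List Bool) × List Bool) (s v : ℕ) : Prop :=
  DescribedWithin c a.1 s v ∧ v ∈ extensionCodes a.2

theorem enumerated_extensionDescribedWithin (c : Code) (m : ℕ) (cond x : List Bool) :
    enumerated (ExtensionDescribedWithin c) ((m, cond), x) =
      describable (eval c) m cond ∩ extensionCodes x := by
  rw [← enumerated_describedWithin]
  ext v
  simp [enumerated, ExtensionDescribedWithin]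

theorem primrecPred_extensionDescribedWithin (c : Code) :
    PrimrecPred fun a : ((ℕ × List Bool) × List Bool) × ℕ × ℕ =>
      ExtensionDescribedWithin c a.1 a.2.1 a.2.2 := by
  have hext : PrimrecRel
      fun (z : List Bool) (a : ((ℕ × List Bool) × List Bool) × ℕ × ℕ) =>
        z.take a.1.2.length = a.1.2 :=
    Primrec.eq.comp (Primrec.list_take.comp (Primrec.list_length.comp (Primrec.snd.comp
      (Primrec.fst.comp .snd))) .fst) (Primrec.snd.comp (Primrec.fst.comp .snd))
  refine ((primrecPred_describedWithin c).comp (Primrec.pair (Primrec.fst.comp .fst) .snd)).and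
    ((hext.exists_mem_list.comp (Primrec.optionToList.comp
      (Primrec.decode₂.comp (Primrec.snd.comp .snd))) .id).of_eq fun a => ?_)
  exact mem_extensionCodes_iff.symm

open scoped Classical in
def ManyExtensionsWithin (c : Code) (a : (ℕ × List Bool) × ℕ × ℕ) (s w : ℕ) : Prop :=
  ∃ u ∈ (decode₂ (List Bool) w).toList, u.length = a.2.1 ∧
    2 ^ a.2.2 ≤ Nat.count (IsEntry (ExtensionDescribedWithin c) (a.1, u)) s

theorem enumerated_manyExtensionsWithin (c : Code) (m : ℕ) (cond : List Bool) (n t : ℕ) :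
    enumerated (ManyExtensionsWithin c) ((m, cond), n, t) = encode '' {u | u.length = n ∧
      2 ^ t ≤ (describable (eval c) m cond ∩ extensionCodes u).ncard} := by
  ext w
  simp only [enumerated, ManyExtensionsWithin, Option.mem_toList,
    Encodable.decode₂_eq_some, Set.mem_image, Set.mem_ofPred_eq]
  have hfin (u : List Bool) :
      (enumerated (ExtensionDescribedWithin c) ((m, cond), u)).Finite := by
    rw [enumerated_extensionDescribedWithin]
    exact (finite_and_ncard_le_describable _ m cond).1.inter_of_left _
  constructor
  · rintro ⟨s, u, rfl, hu, hs⟩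
    refine ⟨u, ⟨hu, ?_⟩, rfl⟩
    rw [← enumerated_extensionDescribedWithin]
    exact (exists_le_count_iff (hfin u)).1 ⟨s, hs⟩
  · rintro ⟨u, ⟨hu, hcard⟩, rfl⟩
    rw [← enumerated_extensionDescribedWithin] at hcard
    obtain ⟨s, hs⟩ := (exists_le_count_iff (hfin u)).2 hcard
    exact ⟨s, u, rfl, hu, hs⟩

open scoped Classical in
theorem primrecPred_manyExtensionsWithin (c : Code) :
    PrimrecPred fun a : ((ℕ × List Bool) × ℕ × ℕ) × ℕ × ℕ =>
      ManyExtensionsWithin c a.1 a.2.1 a.2.2 := by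
  have hcount := Primrec.nat_count (primrecRel_isEntry (primrecPred_extensionDescribedWithin c))
  have hR : PrimrecRel fun (u : List Bool) (a : ((ℕ × List Bool) × ℕ × ℕ) × ℕ × ℕ) =>
      u.length = a.1.2.1 ∧
        2 ^ a.1.2.2 ≤ Nat.count (IsEntry (ExtensionDescribedWithin c) (a.1.1, u)) a.2.1 :=
    (Primrec.eq.comp (Primrec.list_length.comp .fst) (Primrec.fst.comp (Primrec.snd.comp
      (Primrec.fst.comp .snd)))).and
      (Primrec.nat_le.comp (Primrec.nat_pow.comp (.const 2)
          (Primrec.snd.comp (Primrec.snd.comp (Primrec.fst.comp .snd))))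
        (hcount.comp (Primrec.pair (Primrec.fst.comp (Primrec.fst.comp .snd)) .fst)
          (Primrec.fst.comp (Primrec.snd.comp .snd))))
  exact hR.exists_mem_list.comp
    (Primrec.optionToList.comp (Primrec.decode₂.comp (Primrec.snd.comp .snd))) .id

theorem IsUniversal.exists_C_suffix_le {U : Machine} (hU : IsUniversal U) :
    ∃ c, ∀ (x y : List Bool) (m : ℕ),
      encode (x ++ y) ∈ describable U m (pair2 (bin x.length) (bin y.length)) →
      C U y (pair2 x (bin y.length)) ≤ 2 * m.size +
        Nat.log 2 (describable U m (pair2 (bin x.length) (bin y.length)) ∩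
          extensionCodes x).ncard + c := by
  obtain ⟨code, rfl⟩ := exists_code.1 hU.1
  let F : ℕ × ℕ × (List Bool × ℕ) →. List Bool := fun a =>
    (enumPick (ExtensionDescribedWithin code)
      ((a.1, pair2 (bin a.2.2.1.length) (bin a.2.2.2)), a.2.2.1) a.2.1).bind
        fun v => ((decode₂ (List Bool) v).map (List.drop a.2.2.1.length) : Part (List Bool))
  have hprefix : Primrec fun a : ℕ × ℕ × (List Bool × ℕ) => a.2.2.1 :=
    Primrec.fst.comp (Primrec.snd.comp .snd)
  have hF : Partrec F :=
    ((partrec_enumPick (primrecPred_extensionDescribedWithin code)).comp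
      (Primrec.pair (Primrec.pair .fst (primrec_pair2.comp
          (Primrec.nat_bits.comp (Primrec.list_length.comp hprefix))
          (Primrec.nat_bits.comp (Primrec.snd.comp (Primrec.snd.comp .snd))))) hprefix).to_comp
      (Primrec.fst.comp .snd).to_comp).bind
    (Computable.ofOption (Primrec.option_map (Primrec.decode₂.comp .snd)
      (Primrec.list_drop.comp (Primrec.list_length.comp (hprefix.comp (Primrec.fst.comp .fst)))
        .snd).to₂).to_comp)
  obtain ⟨c, hc⟩ := hU.exists_C_le_of_partrec
    (σ := fun w : List Bool × ℕ => pair2 w.1 (bin w.2))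
    (primrec_pair2.comp .fst (Primrec.nat_bits.comp .snd))
    (fun w w' h => Prod.ext (pair2_inj h).1 (Nat.bits_injective (pair2_inj h).2)) hF
  refine ⟨c + 1, fun x y m hmem => ?_⟩
  set cond := pair2 (bin x.length) (bin y.length)
  have hfin : (enumerated (ExtensionDescribedWithin code) ((m, cond), x)).Finite := by
    rw [enumerated_extensionDescribedWithin]
    exact (finite_and_ncard_le_describable _ m _).1.inter_of_left _
  have hv : encode (x ++ y) ∈ enumerated (ExtensionDescribedWithin code) ((m, cond), x) := by
    rw [enumerated_extensionDescribedWithin]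
    exact ⟨hmem, y, rfl⟩
  obtain ⟨i, hi, hpick⟩ := exists_lt_ncard_mem_enumPick hfin hv
  rw [enumerated_extensionDescribedWithin] at hi
  have hCy : C (eval code) y (pair2 x (bin y.length)) ≤ 2 * m.size + i.size + c :=
    hc m i (x, y.length) y (Part.mem_bind_iff.2 ⟨_, hpick, by simp⟩)
  have hi : i.size ≤ Nat.log 2 (describable (eval code) m cond ∩ extensionCodes x).ncard + 1 :=
    Nat.size_le.2 (hi.trans (Nat.lt_pow_succ_log_self (by norm_num) _))
  omega

theorem IsUniversal.exists_C_prefix_add_le {U : Machine} (hU : IsUniversal U) :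
    ∃ c, ∀ (x : List Bool) (n m t : ℕ),
      2 ^ t ≤ (describable U m (pair2 (bin x.length) (bin n)) ∩ extensionCodes x).ncard →
      C U x (bin x.length) + t ≤ m + 2 * (Nat.pair m (Nat.pair t n)).size + c := by
  obtain ⟨code, rfl⟩ := exists_code.1 hU.1
  let F : ℕ × ℕ × ℕ →. List Bool := fun a =>
    (enumPick (ManyExtensionsWithin code)
      ((a.1.unpair.1, pair2 (bin a.2.2) (bin a.1.unpair.2.unpair.2)), a.2.2,
        a.1.unpair.2.unpair.1) a.2.1).bind
        fun w => (decode₂ (List Bool) w : Part (List Bool))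
  have hF : Partrec F := by
    have hh : Primrec fun a : ℕ × ℕ × ℕ => a.1.unpair := Primrec.unpair.comp .fst
    exact ((partrec_enumPick (primrecPred_manyExtensionsWithin code)).comp
      (Primrec.pair (Primrec.pair (Primrec.fst.comp hh) (primrec_pair2.comp
          (Primrec.nat_bits.comp (Primrec.snd.comp .snd))
          (Primrec.nat_bits.comp
            (Primrec.snd.comp (Primrec.unpair.comp (Primrec.snd.comp hh))))))
        (Primrec.pair (Primrec.snd.comp .snd)
          (Primrec.fst.comp (Primrec.unpair.comp (Primrec.snd.comp hh))))).to_comp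
      (Primrec.fst.comp .snd).to_comp).bind
      (Computable.ofOption (Primrec.decode₂.comp .snd).to_comp)
  obtain ⟨c, hc⟩ := hU.exists_C_le_of_partrec Primrec.nat_bits Nat.bits_injective hF
  refine ⟨c + 1, fun x n m t hx => ?_⟩
  set cond := pair2 (bin x.length) (bin n)
  set D := describable (eval code) m cond
  obtain ⟨hDfin, hDcard⟩ := finite_and_ncard_le_describable (eval code) m cond
  set T := {u : List Bool | u.length = x.length ∧ 2 ^ t ≤ (D ∩ extensionCodes u).ncard}
  obtain ⟨hTfin, hTcard⟩ : T.Finite ∧ T.ncard * 2 ^ t ≤ D.ncard :=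
    ((pairwiseDisjoint_extensionCodes x.length).mono
      fun u => Set.inter_subset_right (s := D)).finite_and_ncard_mul_le hDfin
      (fun _ _ => Set.inter_subset_left) (pow_ne_zero t two_ne_zero)
  have hmem : encode x ∈ enumerated (ManyExtensionsWithin code) ((m, cond), x.length, t) := by
    rw [enumerated_manyExtensionsWithin]
    exact ⟨x, ⟨rfl, hx⟩, rfl⟩
  have hfin : (enumerated (ManyExtensionsWithin code) ((m, cond), x.length, t)).Finite := by
    rw [enumerated_manyExtensionsWithin]
    exact hTfin.image _
  obtain ⟨i, hi, hpick⟩ := exists_lt_ncard_mem_enumPick hfin hmem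
  rw [enumerated_manyExtensionsWithin, Set.ncard_image_of_injective _ encode_injective] at hi
  have hFx : x ∈ F (Nat.pair m (Nat.pair t n), i, x.length) := by
    simp only [F, Nat.unpair_pair]
    exact Part.mem_bind_iff.2 ⟨_, hpick, by simp⟩
  have hCx : C (eval code) x (bin x.length) ≤
      2 * (Nat.pair m (Nat.pair t n)).size + i.size + c :=
    hc _ _ _ x hFx
  have htm : t ≤ m + 1 :=
    (Nat.pow_le_pow_iff_right one_lt_two).1 (hx.trans (ncard_describable_inter_le _ m cond _))
  have hT : T.ncard * 2 ^ t ≤ 2 ^ (m + 1 - t) * 2 ^ t := by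
    rw [← pow_add, Nat.sub_add_cancel htm]
    exact hTcard.trans hDcard
  have hsize : i.size ≤ m + 1 - t :=
    Nat.size_le.2 (hi.trans_le (Nat.le_of_mul_le_mul_right hT (by positivity)))
  omega

theorem size_le_log2_add_one (n : ℕ) : n.size ≤ log2 n + 1 :=
  Nat.size_le.2 (Nat.lt_pow_succ_log_self one_lt_two n)

theorem size_overhead_le {n₁ n₂ m t c : ℕ} (hm : m ≤ n₁ + n₂ + c) (ht : t ≤ m + 1) :
    2 * m.size + 2 * (Nat.pair m (Nat.pair t n₂)).size ≤
      22 * (log2 n₁ + log2 n₂) + (14 * c.size + 88) := by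
  have h₁ := Nat.size_pair_le m (Nat.pair t n₂)
  have h₂ := Nat.size_pair_le t n₂
  have h₃ := (Nat.size_le_size ht).trans (Nat.size_add_le m 1)
  have h₄ := (Nat.size_le_size hm).trans (Nat.size_add_le (n₁ + n₂) c)
  have h₅ := Nat.size_add_le n₁ n₂
  have h₆ := size_le_log2_add_one n₁
  have h₇ := size_le_log2_add_one n₂
  simp only [Nat.size_one] at h₃
  omega

theorem IsUniversal.exists_C_add_C_le {U : Machine} (hU : IsUniversal U) :
    ∃ c, ∀ x y : List Bool, C U x (bin x.length) + C U y (pair2 x (bin y.length)) ≤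
      C U (x ++ y) (pair2 (bin x.length) (bin y.length)) +
        22 * (log2 x.length + log2 y.length) + c := by
  obtain ⟨c₀, hlen⟩ := hU.exists_C_le_length_add
  obtain ⟨c₁, hsuffix⟩ := hU.exists_C_suffix_le
  obtain ⟨c₂, hprefix⟩ := hU.exists_C_prefix_add_le
  refine ⟨14 * c₀.size + 88 + c₁ + c₂, fun x y => ?_⟩
  set cond := pair2 (bin x.length) (bin y.length)
  set m := C U (x ++ y) cond
  set e := (describable U m cond ∩ extensionCodes x).ncard
  have hxy : encode (x ++ y) ∈ describable U m cond := encode_mem_describable (hU.2.1 _ _)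
  have he : e ≠ 0 := Set.ncard_ne_zero_of_mem
    (show encode (x ++ y) ∈ describable U m cond ∩ extensionCodes x from ⟨hxy, y, rfl⟩)
    ((finite_and_ncard_le_describable U m cond).1.inter_of_left _)
  have hy : C U y (pair2 x (bin y.length)) ≤ 2 * m.size + Nat.log 2 e + c₁ := hsuffix x y m hxy
  have hx : C U x (bin x.length) + Nat.log 2 e ≤
      m + 2 * (Nat.pair m (Nat.pair (Nat.log 2 e) y.length)).size + c₂ :=
    hprefix x y.length m (Nat.log 2 e) (Nat.pow_log_le_self 2 he)
  have hm : m ≤ x.length + y.length + c₀ := by simpa using hlen (x ++ y) cond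
  have ht : Nat.log 2 e ≤ m + 1 :=
    (Nat.log_mono_right (ncard_describable_inter_le U m cond _)).trans (Nat.log_pow one_lt_two _).le
  have := size_overhead_le hm ht
  omega

/-- Chain rule lower bound for plain complexity:
`C(xy | n_x, n_y) ≥ C(x | n_x) + C(y | x, n_y) − O(log n_x + log n_y)`. -/
theorem chain_rule_lower_bound (U : Machine) (hU : IsUniversal U) :
    ∃ d : ℕ, ∀ x y : List Bool,
      (C U x (bin x.length) : ℤ) + (C U y (pair2 x (bin y.length)) : ℤ)
          - (d : ℤ) * ((log2 x.length : ℤ) + (log2 y.length : ℤ)) - (d : ℤ)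
        ≤ (C U (x ++ y) (pair2 (bin x.length) (bin y.length)) : ℤ) := by
  obtain ⟨c, hc⟩ := hU.exists_C_add_C_le
  refine ⟨22 + c, fun x y => ?_⟩
  have h := hc x y
  have hd : 22 * (log2 x.length + log2 y.length) ≤ (22 + c) * (log2 x.length + log2 y.length) :=
    Nat.mul_le_mul_right _ (Nat.le_add_right 22 c)
  zify at h hd
  push_cast at hd ⊢
  linarith

end SymInfo
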